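/- Let L > 0, and let x, y be real with |y| < arcsin((2/π)·arcsin(e^{−L/2})). Then |1 + exp(−L − π·sinh(x + iy))| ≥ (1 + exp(−L − π·sinh(x)·cos y))·√(1 − e^L·sin²((π/2)·sin y)). -/

import Mathlib

/-!
Write the exponent as `w = a + ib`. Then `‖1 + e^w‖² = (1 + e^a)² - 4e^a sin²(b/2)` and
`(1 + e^a)² = 4e^a cosh²(a/2)`, so the bound reduces to the real inequality
`sin²(b/2) ≤ e^L sin²((π/2) sin y) cosh²(a/2)`.
With `u = (π/2)|sin y| ∈ [0, π/2]`, `c = cosh x` and `K = (π/2) sinh x cos y` one has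
`|sin(b/2)| = |sin(cu)|` and `K² = (c² - 1)(π²/4 - u²)`. The addition formula and the Jordan-type
bound `u cos u ≤ (π²/4 - u²) sin u` give `|sin(cu)| ≤ sin u (1 + K²/2) ≤ sin u cosh K`, and for
`L ≥ 0` we have `cosh K ≤ e^{L/2} cosh(L/2 + K) = e^{L/2} cosh(a/2)`.
-/

open Real

lemma abs_sin_mul_le_sin_add {u c : ℝ} (hu₀ : 0 ≤ u) (hu : u ≤ π / 2) (hc : 1 ≤ c) :
    |sin (c * u)| ≤ sin u + (c - 1) * u * cos u := by
  have hsin : 0 ≤ sin u := sin_nonneg_of_nonneg_of_le_pi hu₀ (by linarith [pi_pos])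
  have hcos : 0 ≤ cos u := cos_nonneg_of_mem_Icc ⟨by linarith [pi_pos], hu⟩
  have hcu : 0 ≤ (c - 1) * u := mul_nonneg (by linarith) hu₀
  calc |sin (c * u)| = |sin u * cos ((c - 1) * u) + cos u * sin ((c - 1) * u)| := by
        rw [← sin_add]; ring_nf
    _ ≤ |sin u * cos ((c - 1) * u)| + |cos u * sin ((c - 1) * u)| := abs_add_le _ _
    _ ≤ sin u * 1 + cos u * ((c - 1) * u) := by
        rw [abs_mul, abs_mul, abs_of_nonneg hsin, abs_of_nonneg hcos]
        gcongr
        · exact abs_cos_le_one _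
        · exact abs_sin_le_abs.trans (abs_of_nonneg hcu).le
    _ = sin u + (c - 1) * u * cos u := by ring

lemma mul_cos_le_sq_sub_sq_mul_sin {u : ℝ} (hu₀ : 0 ≤ u) (hu : u ≤ π / 2) :
    u * cos u ≤ (π ^ 2 / 4 - u ^ 2) * sin u := by
  have hcos : cos u ≤ π / 2 - u := by
    rw [← sin_pi_div_two_sub]; exact sin_le (by linarith)
  have hsin : 2 / π * u ≤ sin u := mul_le_sin hu₀ hu
  have hπ := pi_pos
  calc u * cos u ≤ u * (π / 2 - u) := mul_le_mul_of_nonneg_left hcos hu₀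
    _ ≤ u * (π / 2 - u) + u * (π / 2 - u) * (2 / π * u) :=
        le_add_of_nonneg_right (by positivity)
    _ = (π / 2 + u) * (π / 2 - u) * (2 / π * u) := by field_simp
    _ ≤ (π ^ 2 / 4 - u ^ 2) * sin u := by
        rw [show (π / 2 + u) * (π / 2 - u) = π ^ 2 / 4 - u ^ 2 by ring]
        exact mul_le_mul_of_nonneg_left hsin (by nlinarith)

lemma one_add_sq_div_two_le_cosh (x : ℝ) : 1 + x ^ 2 / 2 ≤ cosh x := by
  have h := self_le_sinh_iff.2 (abs_nonneg (x / 2))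
  have hcosh : cosh x = 1 + 2 * sinh |x / 2| ^ 2 := by
    rw [← cosh_abs, show |x| = 2 * |x / 2| by rw [abs_div]; norm_num; ring,
      cosh_two_mul, cosh_sq]
    ring
  nlinarith [abs_nonneg (x / 2), sq_abs (x / 2)]

lemma cosh_le_exp_mul_cosh_add {p : ℝ} (hp : 0 ≤ p) (q : ℝ) :
    cosh q ≤ exp p * cosh (p + q) := by
  rw [cosh_eq, cosh_eq, mul_div_assoc', mul_add, ← exp_add, ← exp_add]
  gcongr
  · linarith
  · linarith

lemma abs_sin_mul_le_sin_mul_cosh {u c K : ℝ} (hu₀ : 0 ≤ u) (hu : u ≤ π / 2) (hc : 1 ≤ c)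
    (hK : K ^ 2 = (c ^ 2 - 1) * (π ^ 2 / 4 - u ^ 2)) :
    |sin (c * u)| ≤ sin u * cosh K := by
  have hsin : 0 ≤ sin u := sin_nonneg_of_nonneg_of_le_pi hu₀ (by linarith [pi_pos])
  have hcK : (c - 1) * (π ^ 2 / 4 - u ^ 2) ≤ K ^ 2 / 2 := by
    have : 0 ≤ π ^ 2 / 4 - u ^ 2 := by nlinarith [pi_pos]
    rw [hK]; nlinarith [mul_nonneg (sq_nonneg (c - 1)) this]
  calc |sin (c * u)| ≤ sin u + (c - 1) * (u * cos u) := by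
        rw [← mul_assoc]; exact abs_sin_mul_le_sin_add hu₀ hu hc
    _ ≤ sin u + (c - 1) * ((π ^ 2 / 4 - u ^ 2) * sin u) := by
        gcongr sin u + (c - 1) * ?_
        exact mul_cos_le_sq_sub_sq_mul_sin hu₀ hu
    _ = sin u * (1 + (c - 1) * (π ^ 2 / 4 - u ^ 2)) := by ring
    _ ≤ sin u * cosh K := by
        gcongr
        linarith [one_add_sq_div_two_le_cosh K]

lemma sin_sq_le_exp_mul_sin_sq_mul_cosh_sq {L : ℝ} (hL : 0 ≤ L) (x y : ℝ) :
    sin (π / 2 * (cosh x * sin y)) ^ 2 ≤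
      exp L * sin (π / 2 * sin y) ^ 2 * cosh ((L + π * sinh x * cos y) / 2) ^ 2 := by
  set u := π / 2 * |sin y|
  have hu₀ : 0 ≤ u := by positivity
  have hu : u ≤ π / 2 := mul_le_of_le_one_right (by positivity) (abs_sin_le_one y)
  have hK : (π / 2 * (sinh x * cos y)) ^ 2 = (cosh x ^ 2 - 1) * (π ^ 2 / 4 - u ^ 2) := by
    simp only [u, mul_pow, sq_abs, cosh_sq]
    linear_combination (π ^ 2 / 4 * sinh x ^ 2) * sin_sq_add_cos_sq y
  have hsin_u : |sin (π / 2 * sin y)| = sin u := by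
    rw [abs_sin_eq_sin_abs_of_abs_le_pi, abs_mul, abs_of_pos pi_div_two_pos]
    rw [abs_mul, abs_of_pos pi_div_two_pos]
    exact hu.trans (by linarith [pi_pos])
  have hsin_cu : sin (π / 2 * (cosh x * sin y)) ^ 2 = |sin (cosh x * u)| ^ 2 := by
    rw [sq_abs, show cosh x * u = |π / 2 * (cosh x * sin y)| by
      rw [abs_mul, abs_mul, abs_of_pos pi_div_two_pos, abs_of_pos (cosh_pos x)]; ring]
    rcases abs_choice (π / 2 * (cosh x * sin y)) with h | h <;> rw [h]
    rw [sin_neg, neg_sq]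
  have hbound : |sin (cosh x * u)| ≤
      |sin (π / 2 * sin y)| * (exp (L / 2) * cosh ((L + π * sinh x * cos y) / 2)) := by
    calc |sin (cosh x * u)| ≤ sin u * cosh (π / 2 * (sinh x * cos y)) :=
          abs_sin_mul_le_sin_mul_cosh hu₀ hu (one_le_cosh x) hK
      _ ≤ sin u * (exp (L / 2) * cosh (L / 2 + π / 2 * (sinh x * cos y))) := by
          gcongr
          · exact hsin_u ▸ abs_nonneg _
          · exact cosh_le_exp_mul_cosh_add (by linarith) _
      _ = _ := by rw [hsin_u]; ring_nf
  calc sin (π / 2 * (cosh x * sin y)) ^ 2 = |sin (cosh x * u)| ^ 2 := hsin_cu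
    _ ≤ (|sin (π / 2 * sin y)| * (exp (L / 2) * cosh ((L + π * sinh x * cos y) / 2))) ^ 2 :=
        pow_le_pow_left₀ (abs_nonneg _) hbound 2
    _ = exp L * sin (π / 2 * sin y) ^ 2 * cosh ((L + π * sinh x * cos y) / 2) ^ 2 := by
        rw [mul_pow, mul_pow, sq_abs, ← exp_nat_mul]; ring_nf

lemma one_add_exp_sq (a : ℝ) : (1 + exp a) ^ 2 = 4 * exp a * cosh (a / 2) ^ 2 := by
  have h : exp a = exp (a / 2) ^ 2 := by rw [← exp_nat_mul]; ring_nf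
  rw [cosh_eq, exp_neg, h]
  field_simp
  ring

lemma norm_one_add_exp_sq (w : ℂ) :
    ‖1 + Complex.exp w‖ ^ 2 = (1 + exp w.re) ^ 2 - 4 * exp w.re * sin (w.im / 2) ^ 2 := by
  have hcos : cos w.im = 1 - 2 * sin (w.im / 2) ^ 2 := by
    have h := cos_two_mul' (w.im / 2)
    rw [mul_div_cancel₀ _ two_ne_zero] at h
    linear_combination h + sin_sq_add_cos_sq (w.im / 2)
  rw [Complex.sq_norm, Complex.normSq_apply]
  simp only [Complex.add_re, Complex.add_im, Complex.one_re, Complex.one_im, Complex.exp_re,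
    Complex.exp_im]
  linear_combination exp w.re ^ 2 * sin_sq_add_cos_sq w.im + 2 * exp w.re * hcos

lemma mul_sqrt_le_norm_one_add_exp (w : ℂ) {M : ℝ}
    (h : sin (w.im / 2) ^ 2 ≤ M * cosh (w.re / 2) ^ 2) :
    (1 + exp w.re) * √(1 - M) ≤ ‖1 + Complex.exp w‖ := by
  rw [← sqrt_sq (norm_nonneg _), ← sqrt_sq (by positivity : 0 ≤ 1 + exp w.re),
    ← sqrt_mul (sq_nonneg _), norm_one_add_exp_sq, one_add_exp_sq]
  gcongr
  nlinarith [mul_le_mul_of_nonneg_left h (by positivity : 0 ≤ 4 * exp w.re)]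

lemma re_sinh_add_mul_I (x y : ℝ) : (Complex.sinh (x + y * Complex.I)).re = sinh x * cos y := by
  simp [Complex.sinh_add, Complex.sinh_mul_I, Complex.cosh_mul_I, ← Complex.ofReal_sinh,
    ← Complex.ofReal_cosh, ← Complex.ofReal_cos, ← Complex.ofReal_sin]

lemma im_sinh_add_mul_I (x y : ℝ) : (Complex.sinh (x + y * Complex.I)).im = cosh x * sin y := by
  simp [Complex.sinh_add, Complex.sinh_mul_I, Complex.cosh_mul_I, ← Complex.ofReal_sinh,
    ← Complex.ofReal_cosh, ← Complex.ofReal_cos, ← Complex.ofReal_sin]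

theorem abs_one_add_exp_neg_L_ge_general (L x y : ℝ) (hL : 0 < L) :
    ‖(1 + Complex.exp (-L - π * Complex.sinh (x + y * Complex.I)))‖
      ≥ (1 + Real.exp (-L - π * Real.sinh x * Real.cos y)) *
        Real.sqrt (1 - Real.exp L * Real.sin (π / 2 * Real.sin y) ^ 2) := by
  set w : ℂ := -L - π * Complex.sinh (x + y * Complex.I)
  have hre : w.re = -L - π * sinh x * cos y := by
    simp [w, re_sinh_add_mul_I, mul_assoc]
  have him : w.im = -(π * (cosh x * sin y)) := by
    simp [w, im_sinh_add_mul_I]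
  refine hre ▸ mul_sqrt_le_norm_one_add_exp w ?_
  have him_half : sin (w.im / 2) ^ 2 = sin (π / 2 * (cosh x * sin y)) ^ 2 := by
    rw [him, ← neg_sq, ← sin_neg]; ring_nf
  have hre_half : cosh (w.re / 2) = cosh ((L + π * sinh x * cos y) / 2) := by
    rw [hre, ← cosh_neg]; ring_nf
  rw [him_half, hre_half]
  exact sin_sq_le_exp_mul_sin_sq_mul_cosh_sq hL.le x y

theorem abs_one_add_exp_neg_L_ge (L x y : ℝ) (hL : 0 < L)
    (hy : |y| < Real.arcsin ((2 / π) * Real.arcsin (Real.exp (-L / 2)))) :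
    ‖(1 + Complex.exp (-L - π * Complex.sinh (x + y * Complex.I)))‖
      ≥ (1 + Real.exp (-L - π * Real.sinh x * Real.cos y)) *
        Real.sqrt (1 - Real.exp L * Real.sin (π / 2 * Real.sin y) ^ 2) :=
  abs_one_add_exp_neg_L_ge_general L x y hL
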